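/- arXiv:2403.15578 — 6 statements merged into one kernel-verified Lean document; each statement's English description precedes it below -/
import Mathlib

section
/- If A and B are two k-subsets of [2k+r] joined by a path of length 2p (p ≥ 0) in the Kneser graph K(2k+r,k), then |A ∩ B| ≥ k - rp. -/
/-- The Kneser graph: vertices are the `k`-subsets of `[n]`, adjacency is disjointness. -/
def kneserGraph (n k : ℕ) : SimpleGraph {A : Finset (Fin n) // A.card = k} where
  Adj A B := A ≠ B ∧ Disjoint A.1 B.1
  symm := ⟨fun A B h => ⟨h.1.symm, h.2.symm⟩⟩
  loopless := ⟨fun A h => h.1 rfl⟩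

/-- The exact distance-`d` graph of a graph `G`. -/
def exactDistanceGraph {V : Type*} (G : SimpleGraph V) (d : ℕ) : SimpleGraph V where
  Adj A B := A ≠ B ∧ G.dist A B = d
  symm := ⟨fun A B h => ⟨h.1.symm, by rw [SimpleGraph.dist_comm]; exact h.2⟩⟩
  loopless := ⟨fun A h => h.1 rfl⟩

/-!
Measure the distance between `k`-sets by `|A \ B| = k - |A ∩ B|`. It satisfies the triangle
inequality, and two `k`-sets with a common neighbour `M` both avoid `M`, so they lie in a set
of size `k + r` and differ in at most `r` elements. Hence each pair of steps of the walk moves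
the distance by at most `r`.
-/

namespace Finset

variable {α : Type*} [DecidableEq α]

theorem card_sdiff_le_card_sdiff_add_card_sdiff (s t u : Finset α) :
    #(s \ u) ≤ #(s \ t) + #(t \ u) :=
  (card_le_card (sdiff_triangle s t u)).trans (card_union_le _ _)

theorem card_sdiff_add_card_add_card_le_of_disjoint [Fintype α] {s t m : Finset α}
    (hs : Disjoint s m) (ht : Disjoint t m) :
    #(s \ t) + #t + #m ≤ Fintype.card α := by
  have hst : Disjoint (s \ t ∪ t) m := by
    rw [sdiff_union_self_eq_union]
    exact disjoint_union_left.mpr ⟨hs, ht⟩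
  rw [← card_union_of_disjoint sdiff_disjoint, ← card_union_of_disjoint hst]
  exact card_le_univ _

end Finset

namespace kneserGraph

theorem card_sdiff_le_of_adj_of_adj {k r : ℕ}
    {A M C : {A : Finset (Fin (2 * k + r)) // A.card = k}}
    (hAM : (kneserGraph (2 * k + r) k).Adj A M) (hMC : (kneserGraph (2 * k + r) k).Adj M C) :
    (A.1 \ C.1).card ≤ r := by
  have h := Finset.card_sdiff_add_card_add_card_le_of_disjoint hAM.2 hMC.2.symm
  rw [C.2, M.2, Fintype.card_fin] at h
  omega

theorem card_sdiff_le_of_walk_length_eq {k r p : ℕ}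
    {A B : {A : Finset (Fin (2 * k + r)) // A.card = k}}
    (w : (kneserGraph (2 * k + r) k).Walk A B) (hw : w.length = 2 * p) :
    (A.1 \ B.1).card ≤ r * p := by
  induction p generalizing A with
  | zero =>
    obtain rfl : A = B := SimpleGraph.Walk.eq_of_length_eq_zero hw
    simp
  | succ p ih =>
    match w with
    | .cons hAM (.cons hMC w') =>
      have hw' : w'.length = 2 * p := by
        simp only [SimpleGraph.Walk.length_cons] at hw
        omega
      calc (A.1 \ B.1).card
          ≤ _ := Finset.card_sdiff_le_card_sdiff_add_card_sdiff _ _ _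
        _ ≤ r + r * p := add_le_add (card_sdiff_le_of_adj_of_adj hAM hMC) (ih w' hw')
        _ = r * (p + 1) := by ring

end kneserGraph

theorem stmt0_general (k r p : ℕ)
    (A B : {A : Finset (Fin (2 * k + r)) // A.card = k})
    (hpath : ∃ w : (kneserGraph (2 * k + r) k).Walk A B, w.length = 2 * p) :
    k - r * p ≤ (A.1 ∩ B.1).card := by
  obtain ⟨w, hw⟩ := hpath
  have hdiff := kneserGraph.card_sdiff_le_of_walk_length_eq w hw
  have hsplit := Finset.card_sdiff_add_card_inter A.1 B.1
  rw [A.2] at hsplit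
  omega

theorem stmt0 (k r p : ℕ) (hk : 0 < k) (hr : 0 < r)
    (A B : {A : Finset (Fin (2 * k + r)) // A.card = k})
    (hpath : ∃ w : (kneserGraph (2 * k + r) k).Walk A B, w.length = 2 * p) :
    k - r * p ≤ (A.1 ∩ B.1).card :=
  stmt0_general k r p A B hpath
end

section
/- Let k ≥ 2 and r ≥ k-1 be positive integers. Then the diameter of the Kneser graph K(2k+r,k) equals 2. -/
/-!
Two intersecting `k`-subsets of `[n]` cover at most `2k - 1` points, so when `n ≥ 3k - 1` some
`k` points avoid both and form a common neighbour; hence all distances are at most `2`.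
Conversely, for `2 ≤ k < n` two distinct `k`-subsets of a `(k + 1)`-set meet, so the graph is
not complete and the diameter is exactly `2`.
-/

open Finset SimpleGraph

namespace SimpleGraph

variable {V : Type*} {G : SimpleGraph V}

lemma edist_le_two_of_adj_of_adj {u v w : V} (huv : G.Adj u v) (hvw : G.Adj v w) :
    G.edist u w ≤ 2 :=
  (Walk.cons huv hvw.toWalk).edist_le

lemma diam_eq_two_of_edist_le_two (hle : ∀ u v, G.edist u v ≤ 2) {u v : V} (hne : u ≠ v)
    (hnadj : ¬ G.Adj u v) : G.diam = 2 := by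
  have : Nontrivial V := ⟨⟨u, v, hne⟩⟩
  have hediam_le : G.ediam ≤ 2 := ediam_le_of_edist_le hle
  have hediam_ne_one : G.ediam ≠ 1 := by
    rw [Ne, ediam_eq_one]
    rintro rfl
    exact hnadj hne
  have hediam : G.ediam = 2 := by
    have hne_top : G.ediam ≠ ⊤ := ne_top_of_le_ne_top (by simp) hediam_le
    have hne_zero := G.ediam_ne_zero
    lift G.ediam to ℕ using hne_top with d
    norm_cast at *
    omega
  rw [diam, hediam]
  rfl

end SimpleGraph

lemma Finset.exists_card_eq_disjoint {α : Type*} [Fintype α] [DecidableEq α] {s : Finset α}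
    {k : ℕ} (h : #s + k ≤ Fintype.card α) : ∃ t : Finset α, #t = k ∧ Disjoint t s := by
  have hk : k ≤ #sᶜ := by
    rw [card_compl]
    omega
  obtain ⟨t, hts, htk⟩ := exists_subset_card_eq hk
  exact ⟨t, htk, subset_compl_iff_disjoint_right.mp hts⟩

section Kneser

variable {n k : ℕ}

lemma kneserGraph_adj_of_disjoint (hk : 0 < k) {A B : {A : Finset (Fin n) // #A = k}}
    (h : Disjoint A.1 B.1) : (kneserGraph n k).Adj A B := by
  refine ⟨?_, h⟩
  rintro rfl
  have hA := A.2
  rw [disjoint_self.mp h, bot_eq_empty, card_empty] at hA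
  omega

lemma kneserGraph_exists_adj_adj_of_not_disjoint (hn : 3 * k ≤ n + 1)
    {A B : {A : Finset (Fin n) // #A = k}} (h : ¬ Disjoint A.1 B.1) :
    ∃ C, (kneserGraph n k).Adj A C ∧ (kneserGraph n k).Adj C B := by
  have hinter : 0 < #(A.1 ∩ B.1) := card_pos.mpr (not_disjoint_iff_nonempty_inter.mp h)
  have hunion : #(A.1 ∪ B.1) + k ≤ Fintype.card (Fin n) := by
    have hcard := card_union_add_card_inter A.1 B.1
    rw [A.2, B.2] at hcard
    rw [Fintype.card_fin]
    omega
  obtain ⟨C, hCk, hC⟩ := exists_card_eq_disjoint hunion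
  rw [disjoint_union_right] at hC
  have hk : 0 < k := A.2 ▸ hinter.trans_le (card_le_card inter_subset_left)
  exact ⟨⟨C, hCk⟩, kneserGraph_adj_of_disjoint hk hC.1.symm, kneserGraph_adj_of_disjoint hk hC.2⟩

lemma kneserGraph_edist_le_two (hn : 3 * k ≤ n + 1) (A B : {A : Finset (Fin n) // #A = k}) :
    (kneserGraph n k).edist A B ≤ 2 := by
  by_cases hAB : A = B
  · simp [hAB]
  by_cases hadj : (kneserGraph n k).Adj A B
  · simp [edist_eq_one_iff_adj.mpr hadj]
  obtain ⟨C, hAC, hCB⟩ := kneserGraph_exists_adj_adj_of_not_disjoint hn fun h => hadj ⟨hAB, h⟩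
  exact edist_le_two_of_adj_of_adj hAC hCB

lemma kneserGraph_exists_ne_not_adj (hk : 2 ≤ k) (hkn : k < n) :
    ∃ A B : {A : Finset (Fin n) // #A = k}, A ≠ B ∧ ¬ (kneserGraph n k).Adj A B := by
  obtain ⟨S, -, hS⟩ := exists_subset_card_eq (s := (univ : Finset (Fin n))) (n := k + 1)
    (by simpa using hkn)
  obtain ⟨x, hx, y, hy, hxy⟩ := one_lt_card.mp (show 1 < #S by omega)
  have hA : #(S.erase x) = k := by rw [card_erase_of_mem hx, hS, Nat.add_sub_cancel]
  have hB : #(S.erase y) = k := by rw [card_erase_of_mem hy, hS, Nat.add_sub_cancel]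
  refine ⟨⟨_, hA⟩, ⟨_, hB⟩, fun h => ?_, fun h => ?_⟩
  · have hS_erase : S.erase x = S.erase y := congrArg Subtype.val h
    exact notMem_erase y S (hS_erase ▸ mem_erase.mpr ⟨hxy.symm, hy⟩)
  · have hdisj := card_union_of_disjoint h.2
    have hsub := card_le_card (union_subset (erase_subset x S) (erase_subset y S))
    simp only [hA, hB] at hdisj
    omega

end Kneser

theorem stmt2_general (k r : ℕ) (hk : 2 ≤ k) (hrk : k - 1 ≤ r) :
    (kneserGraph (2 * k + r) k).diam = 2 := by
  obtain ⟨A, B, hne, hnadj⟩ := kneserGraph_exists_ne_not_adj hk (by omega : k < 2 * k + r)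
  exact diam_eq_two_of_edist_le_two (kneserGraph_edist_le_two (by omega)) hne hnadj

theorem stmt2 (k r : ℕ) (hk : 2 ≤ k) (hr : 0 < r) (hrk : k - 1 ≤ r) :
    (kneserGraph (2 * k + r) k).diam = 2 :=
  stmt2_general k r hk hrk
end

section
/- Let k, r be positive integers with 1 ≤ r < k-1, and let A, B be distinct k-subsets of [2k+r] with |A ∩ B| = s. Then the distance between A and B in the Kneser graph K(2k+r,k) is min{2⌈(k-s)/r⌉, 2⌈s/r⌉ + 1}. -/
/-!
If `u` and `v` are disjoint `k`-subsets of `[2k+r]`, then `u ∪ v` misses only `r` points, so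
for every `k`-set `w` the sum `|u ∩ w| + |v ∩ w|` lies between `k - r` and `k`. Following a walk
that ends in `B` backwards, the overlap with `B` therefore alternates: `2t` steps before `B` it
is at least `k - tr`, and `2t + 1` steps before `B` it is at most `tr`. This is the lower bound.

Conversely, a two-step move `A → C → A'`, with `C` any `k`-set avoiding `A ∪ A'`, can exchange
up to `r` points of `A \ B` for points of `B \ A`, giving an even walk of length
`2⌈|B \ A|/r⌉`. Stepping first to a neighbour of `A` that contains `B \ A` leaves only
`|A ∩ B|` points to exchange, giving the odd walk.
-/

open Finset SimpleGraph

namespace Kneser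

theorem card_inter_add_card_inter_add_card_sdiff {α : Type*} [DecidableEq α] {u v : Finset α}
    (huv : Disjoint u v) (w : Finset α) :
    #(u ∩ w) + #(v ∩ w) + #(w \ (u ∪ v)) = #w := by
  rw [← card_union_of_disjoint (huv.mono inter_subset_left inter_subset_left),
    ← union_inter_distrib_right, inter_comm, card_inter_add_card_sdiff]

abbrev Vertex (k r : ℕ) := {A : Finset (Fin (2 * k + r)) // #A = k}

variable {k r : ℕ}

theorem eq_of_card_sdiff_eq_zero {A B : Vertex k r} (h : #(B.1 \ A.1) = 0) : A = B :=
  Subtype.ext (eq_of_subset_of_card_le (sdiff_eq_empty_iff_subset.1 (card_eq_zero.1 h))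
    (by rw [A.2, B.2])).symm

theorem card_sdiff_eq_sub_card_inter (A B : Vertex k r) : #(B.1 \ A.1) = k - #(A.1 ∩ B.1) := by
  have := card_sdiff_add_card_inter B.1 A.1
  rw [inter_comm, B.2] at this
  omega

theorem adj_iff_disjoint (hk : 0 < k) {A C : Vertex k r} :
    (kneserGraph (2 * k + r) k).Adj A C ↔ Disjoint A.1 C.1 := by
  refine ⟨And.right, fun h => ⟨?_, h⟩⟩
  rintro rfl
  have := A.2
  rw [disjoint_self.1 h] at this
  simp at this
  omega

theorem card_inter_add_card_inter_le {u v : Vertex k r}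
    (h : (kneserGraph (2 * k + r) k).Adj u v) (w : Vertex k r) :
    #(u.1 ∩ w.1) + #(v.1 ∩ w.1) ≤ k := by
  have := card_inter_add_card_inter_add_card_sdiff h.2 w.1
  omega

theorem le_card_inter_add_card_inter_add {u v : Vertex k r}
    (h : (kneserGraph (2 * k + r) k).Adj u v) (w : Vertex k r) :
    k ≤ #(u.1 ∩ w.1) + #(v.1 ∩ w.1) + r := by
  have hrest : #(w.1 \ (u.1 ∪ v.1)) ≤ r := calc
    _ ≤ #(u.1 ∪ v.1)ᶜ := card_le_card fun x hx => mem_compl.2 (mem_sdiff.1 hx).2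
    _ = r := by rw [card_compl, Fintype.card_fin, card_union_of_disjoint h.2, u.2, v.2]; omega
  have := card_inter_add_card_inter_add_card_sdiff h.2 w.1
  omega

theorem card_inter_bounds_of_walk {X Y : Vertex k r} (p : (kneserGraph (2 * k + r) k).Walk X Y)
    (t : ℕ) : (p.length = 2 * t → k ≤ #(X.1 ∩ Y.1) + r * t) ∧
      (p.length = 2 * t + 1 → #(X.1 ∩ Y.1) ≤ r * t) := by
  induction p generalizing t with
  | @nil X =>
    refine ⟨fun _ => ?_, fun h => by simp at h⟩
    rw [inter_self, X.2]
    exact Nat.le_add_right _ _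
  | @cons u v w hadj q ih =>
    have hlo := le_card_inter_add_card_inter_add hadj w
    have hhi := card_inter_add_card_inter_le hadj w
    rw [Walk.length_cons]
    constructor
    · intro hl
      obtain ⟨t, rfl⟩ : ∃ t', t = t' + 1 := ⟨t - 1, by omega⟩
      have := (ih t).2 (by omega)
      rw [mul_add, mul_one]
      omega
    · intro hl
      have := (ih t).1 (by omega)
      omega

theorem min_le_length (hr : 0 < r) {A B : Vertex k r}
    (p : (kneserGraph (2 * k + r) k).Walk A B) :
    min (2 * ((k - #(A.1 ∩ B.1)) ⌈/⌉ r)) (2 * (#(A.1 ∩ B.1) ⌈/⌉ r) + 1) ≤ p.length := by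
  obtain ⟨t, ht | ht⟩ := Nat.even_or_odd' p.length
  · have := (card_inter_bounds_of_walk p t).1 ht
    have : (k - #(A.1 ∩ B.1)) ⌈/⌉ r ≤ t := (ceilDiv_le_iff_le_mul hr).2 (by omega)
    omega
  · have := (card_inter_bounds_of_walk p t).2 ht
    have : #(A.1 ∩ B.1) ⌈/⌉ r ≤ t := (ceilDiv_le_iff_le_mul hr).2 (by omega)
    omega

theorem exists_superset_disjoint {S X : Finset (Fin (2 * k + r))} (hSX : Disjoint S X)
    (hS : #S ≤ k) (hX : #X ≤ k + r) : ∃ C : Vertex k r, S ⊆ C.1 ∧ Disjoint C.1 X := by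
  obtain ⟨C, hSC, hCX, hC⟩ := exists_subsuperset_card_eq (subset_compl_iff_disjoint_right.2 hSX)
    hS (by rw [card_compl, Fintype.card_fin]; omega)
  exact ⟨⟨C, hC⟩, hSC, subset_compl_iff_disjoint_right.1 hCX⟩

theorem exists_card_sdiff_le_card_sdiff_sub (A B : Vertex k r) :
    ∃ A' : Vertex k r, #(A'.1 \ A.1) ≤ r ∧ #(B.1 \ A'.1) ≤ #(B.1 \ A.1) - r := by
  obtain ⟨E, hE, hEcard⟩ := exists_subset_card_eq (min_le_right r #(B.1 \ A.1))
  have hEB : A.1 ∩ B.1 ∪ E ⊆ B.1 := union_subset inter_subset_right (hE.trans sdiff_subset)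
  obtain ⟨A', hA'lo, hA'hi, hA'⟩ := exists_subsuperset_card_eq
    (union_subset_union_left inter_subset_left : A.1 ∩ B.1 ∪ E ⊆ A.1 ∪ E)
    ((card_le_card hEB).trans B.2.le) (A.2.ge.trans (card_le_card subset_union_left))
  refine ⟨⟨A', hA'⟩, ?_, ?_⟩
  · calc #(A' \ A.1) ≤ #E := card_le_card fun x hx => by
          have := hA'hi (mem_sdiff.1 hx).1
          simp only [mem_sdiff, mem_union] at hx this
          tauto
      _ ≤ r := hEcard ▸ min_le_left _ _
  · calc #(B.1 \ A') ≤ #((B.1 \ A.1) \ E) := card_le_card fun x hx => by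
          have := fun h => (mem_sdiff.1 hx).2 (hA'lo h)
          simp only [mem_sdiff, mem_union, mem_inter] at hx this ⊢
          tauto
      _ = #(B.1 \ A.1) - r := by rw [card_sdiff_of_subset hE, hEcard]; omega

theorem exists_walk_length_le (t : ℕ) (A B : Vertex k r) (h : #(B.1 \ A.1) ≤ r * t) :
    ∃ p : (kneserGraph (2 * k + r) k).Walk A B, p.length ≤ 2 * t := by
  induction t generalizing A with
  | zero =>
    obtain rfl := eq_of_card_sdiff_eq_zero (by simpa using h)
    exact ⟨Walk.nil, by simp⟩
  | succ t ih =>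
    by_cases h0 : #(B.1 \ A.1) = 0
    · obtain rfl := eq_of_card_sdiff_eq_zero h0
      exact ⟨Walk.nil, by simp⟩
    have hk : 0 < k := ((Nat.pos_of_ne_zero h0).trans_le (card_le_card sdiff_subset)).trans_eq B.2
    obtain ⟨A', hA'A, hBA'⟩ := exists_card_sdiff_le_card_sdiff_sub A B
    obtain ⟨C, -, hC⟩ := exists_superset_disjoint (disjoint_empty_left (A'.1 ∪ A.1)) (by simp)
      (by rw [← card_sdiff_add_card, A.2]; omega)
    obtain ⟨p, hp⟩ := ih A' (by rw [mul_add, mul_one] at h; omega)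
    have hAC := (adj_iff_disjoint hk).2 (hC.mono_right subset_union_right).symm
    have hCA' := (adj_iff_disjoint hk).2 (hC.mono_right subset_union_left)
    exact ⟨.cons hAC (.cons hCA' p), by simp only [Walk.length_cons]; omega⟩

theorem preconnected (hr : 0 < r) : (kneserGraph (2 * k + r) k).Preconnected := fun A B =>
  have h : #(B.1 \ A.1) ≤ r * k :=
    ((card_le_card sdiff_subset).trans_eq B.2).trans (Nat.le_mul_of_pos_left k hr)
  (exists_walk_length_le k A B h).choose.reachable

theorem dist_le_even (hr : 0 < r) (A B : Vertex k r) :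
    (kneserGraph (2 * k + r) k).dist A B ≤ 2 * ((k - #(A.1 ∩ B.1)) ⌈/⌉ r) := by
  have h : #(B.1 \ A.1) ≤ r * ((k - #(A.1 ∩ B.1)) ⌈/⌉ r) :=
    card_sdiff_eq_sub_card_inter A B ▸ le_smul_ceilDiv hr
  obtain ⟨p, hp⟩ := exists_walk_length_le _ A B h
  exact (dist_le p).trans hp

theorem dist_le_odd (hr : 0 < r) (A B : Vertex k r) :
    (kneserGraph (2 * k + r) k).dist A B ≤ 2 * (#(A.1 ∩ B.1) ⌈/⌉ r) + 1 := by
  rcases Nat.eq_zero_or_pos k with rfl | hk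
  · have hB : #(B.1 \ A.1) = 0 := Nat.eq_zero_of_le_zero ((card_le_card sdiff_subset).trans_eq B.2)
    simp [eq_of_card_sdiff_eq_zero hB]
  obtain ⟨C, hBAC, hAC⟩ := exists_superset_disjoint (sdiff_disjoint : Disjoint (B.1 \ A.1) A.1)
    ((card_le_card sdiff_subset).trans_eq B.2) (by rw [A.2]; omega)
  have hBC : #(B.1 \ C.1) ≤ r * (#(A.1 ∩ B.1) ⌈/⌉ r) := calc
    #(B.1 \ C.1) ≤ #(A.1 ∩ B.1) := card_le_card fun x hx => by
        have := fun h => (mem_sdiff.1 hx).2 (hBAC h)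
        simp only [mem_sdiff, mem_inter] at hx this ⊢
        tauto
    _ ≤ _ := le_smul_ceilDiv hr
  obtain ⟨p, hp⟩ := exists_walk_length_le _ C B hBC
  refine (dist_le (.cons ((adj_iff_disjoint hk).2 hAC.symm) p)).trans ?_
  simp only [Walk.length_cons]
  omega

theorem min_le_dist (hr : 0 < r) (A B : Vertex k r) :
    min (2 * ((k - #(A.1 ∩ B.1)) ⌈/⌉ r)) (2 * (#(A.1 ∩ B.1) ⌈/⌉ r) + 1)
      ≤ (kneserGraph (2 * k + r) k).dist A B := by
  obtain ⟨p, hp⟩ := (preconnected hr A B).exists_walk_length_eq_dist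
  exact hp ▸ min_le_length hr p

end Kneser

theorem stmt3_general (k r s : ℕ) (hr : 1 ≤ r)
    (A B : {A : Finset (Fin (2 * k + r)) // A.card = k})
    (hs : (A.1 ∩ B.1).card = s) :
    (kneserGraph (2 * k + r) k).dist A B
      = min (2 * ((k - s) ⌈/⌉ r)) (2 * (s ⌈/⌉ r) + 1) := by
  subst hs
  exact le_antisymm (le_min (Kneser.dist_le_even hr A B) (Kneser.dist_le_odd hr A B))
    (Kneser.min_le_dist hr A B)

theorem stmt3 (k r s : ℕ) (hr : 1 ≤ r) (hrk : r < k - 1)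
    (A B : {A : Finset (Fin (2 * k + r)) // A.card = k}) (hAB : A ≠ B)
    (hs : (A.1 ∩ B.1).card = s) :
    (kneserGraph (2 * k + r) k).dist A B
      = min (2 * ((k - s) ⌈/⌉ r)) (2 * (s ⌈/⌉ r) + 1) :=
  stmt3_general k r s hr A B hs
end

section
/- Let k and r be positive integers. Then the diameter of the Kneser graph K(2k+r,k) equals ⌈(k-1)/r⌉ + 1. -/
open Finset SimpleGraph

namespace Finset

variable {α : Type*} [DecidableEq α]

lemma card_inter_add_card_inter_le_of_disjoint {A C C' : Finset α} (h : Disjoint C C') :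
    #(C ∩ A) + #(C' ∩ A) ≤ #A := by
  rw [← card_union_of_disjoint (h.mono inter_subset_left inter_subset_left),
    ← union_inter_distrib_right]
  exact card_le_card inter_subset_right

lemma card_add_card_add_card_le_of_disjoint [Fintype α] {A C C' : Finset α}
    (h : Disjoint C C') : #A + #C + #C' ≤ #(C ∩ A) + #(C' ∩ A) + Fintype.card α := by
  have hunion := card_union_add_card_inter (C ∪ C') A
  rw [card_union_of_disjoint h, union_inter_distrib_right,
    card_union_of_disjoint (h.mono inter_subset_left inter_subset_left)] at hunion
  have := card_le_univ (C ∪ C' ∪ A)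
  omega

lemma exists_card_eq_card_eq_card_inter_eq [Fintype α] {k s : ℕ} (hs : s ≤ k)
    (hα : 2 * k - s ≤ Fintype.card α) :
    ∃ A B : Finset α, #A = k ∧ #B = k ∧ #(A ∩ B) = s := by
  obtain ⟨A, -, hA⟩ := exists_subset_card_eq (s := (univ : Finset α)) (n := k)
    (by rw [card_univ]; omega)
  obtain ⟨S, hSA, hS⟩ := exists_subset_card_eq (hA ▸ hs : s ≤ #A)
  obtain ⟨T, hTA, hT⟩ := exists_subset_card_eq (s := Aᶜ) (n := k - s)
    (by rw [card_compl, hA]; omega)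
  have hAT : Disjoint A T := subset_compl_iff_disjoint_left.mp hTA
  refine ⟨A, S ∪ T, hA, ?_, ?_⟩
  · rw [card_union_of_disjoint (hAT.mono_left hSA)]
    omega
  · rw [inter_union_distrib_left, inter_eq_right.mpr hSA, disjoint_iff_inter_eq_empty.mp hAT,
      union_empty, hS]

lemma exists_card_union_le_min_le_card_inter {A B : Finset α} {k : ℕ} (r : ℕ) (hA : #A = k)
    (hB : #B = k) :
    ∃ A', #A' = k ∧ #(A ∪ A') ≤ k + r ∧ min k (#(A ∩ B) + r) ≤ #(A' ∩ B) := by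
  generalize hs : #(A ∩ B) = s
  have hsk : s ≤ k := hs ▸ hA ▸ card_le_card inter_subset_left
  have hBA : #(B \ A) = k - s := by
    have := card_inter_add_card_sdiff B A
    rw [inter_comm, hs] at this
    omega
  obtain ⟨T, hTB, hT⟩ := exists_subset_card_eq (s := B \ A) (n := min r (k - s)) (by omega)
  have hAT : Disjoint A T := disjoint_sdiff.mono_right hTB
  have hAT_card : #(A ∪ T) = k + min r (k - s) := by rw [card_union_of_disjoint hAT, hA, hT]
  have hST_card : #(A ∩ B ∪ T) = s + min r (k - s) := by
    rw [card_union_of_disjoint (hAT.mono_left inter_subset_left), hT, hs]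
  obtain ⟨A', hsub, hsup, hA'⟩ :=
    exists_subsuperset_card_eq (s := A ∩ B ∪ T) (t := A ∪ T) (n := k)
      (union_subset_union inter_subset_left subset_rfl) (by omega) (by omega)
  refine ⟨A', hA', ?_, ?_⟩
  · calc #(A ∪ A') ≤ #(A ∪ T) := card_le_card (union_subset subset_union_left hsup)
      _ ≤ k + r := by omega
  · calc min k (s + r) = #(A ∩ B ∪ T) := by omega
      _ ≤ #(A' ∩ B) := card_le_card <|
          subset_inter hsub (union_subset inter_subset_right (hTB.trans sdiff_subset))

end Finset

namespace SimpleGraph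

variable {V : Type*} {G : SimpleGraph V}

lemma diam_eq_of_forall_exists_walk_length_le {d : ℕ}
    (hup : ∀ u v, ∃ p : G.Walk u v, p.length ≤ d)
    (hlow : ∃ u v, ∀ p : G.Walk u v, d ≤ p.length) : G.diam = d := by
  have hle : G.ediam ≤ d := ediam_le_of_edist_le fun u v ↦ by
    obtain ⟨p, hp⟩ := hup u v
    exact (edist_le p).trans (by exact_mod_cast hp)
  obtain ⟨u, v, huv⟩ := hlow
  obtain ⟨p, hp⟩ := exists_walk_of_edist_ne_top
    ((edist_le_ediam.trans hle).trans_lt (ENat.natCast_lt_top d)).ne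
  have hge : (d : ℕ∞) ≤ G.ediam :=
    calc (d : ℕ∞) ≤ p.length := by exact_mod_cast huv p
      _ = G.edist u v := hp
      _ ≤ G.ediam := edist_le_ediam
  rw [diam, le_antisymm hle hge, ENat.toNat_natCast]

end SimpleGraph

namespace kneserGraph

lemma adj_of_disjoint {n k : ℕ} (hk : 0 < k) {A B : {S : Finset (Fin n) // #S = k}}
    (h : Disjoint A.1 B.1) : (kneserGraph n k).Adj A B := by
  refine ⟨fun hAB ↦ ?_, h⟩
  subst hAB
  have hA := A.2
  rw [(disjoint_self_iff_empty _).mp h, card_empty] at hA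
  omega

variable {k r : ℕ} {A B : {S : Finset (Fin (2 * k + r)) // #S = k}}

lemma exists_adj_adj_of_card_union_le (hk : 0 < k) (h : #(A.1 ∪ B.1) ≤ k + r) :
    ∃ C, (kneserGraph (2 * k + r) k).Adj A C ∧ (kneserGraph (2 * k + r) k).Adj C B := by
  obtain ⟨C, hC, hCk⟩ := exists_subset_card_eq (s := (A.1 ∪ B.1)ᶜ) (n := k)
    (by rw [card_compl, Fintype.card_fin]; omega)
  rw [subset_compl_iff_disjoint_right, disjoint_union_right] at hC
  exact ⟨⟨C, hCk⟩, adj_of_disjoint hk hC.1.symm, adj_of_disjoint hk hC.2⟩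

lemma exists_adj_le_card_inter_add_card_inter (hk : 0 < k) :
    ∃ D, (kneserGraph (2 * k + r) k).Adj D B ∧ k ≤ #(A.1 ∩ D.1) + #(A.1 ∩ B.1) := by
  have hA := card_sdiff_add_card_inter A.1 B.1
  rw [A.2] at hA
  obtain ⟨D, hAD, hDB, hD⟩ := exists_subsuperset_card_eq (s := A.1 \ B.1) (t := B.1ᶜ) (n := k)
    (fun x hx ↦ mem_compl.mpr (mem_sdiff.mp hx).2) (by omega)
    (by rw [card_compl, Fintype.card_fin, B.2]; omega)
  refine ⟨⟨D, hD⟩, adj_of_disjoint hk (subset_compl_iff_disjoint_right.mp hDB), ?_⟩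
  have := card_le_card (subset_inter sdiff_subset hAD)
  change k ≤ #(A.1 ∩ D) + _
  omega

lemma card_inter_bounds_of_walk (p : (kneserGraph (2 * k + r) k).Walk A B) (u : ℕ) :
    (p.length = 2 * u → k ≤ #(A.1 ∩ B.1) + u * r) ∧
      (p.length = 2 * u + 1 → #(A.1 ∩ B.1) ≤ u * r) := by
  induction p generalizing u with
  | @nil A =>
    refine ⟨fun _ ↦ ?_, fun h ↦ by simp at h⟩
    rw [inter_self, A.2]
    omega
  | @cons C C' B hCC' p ih =>
    have hupper := card_inter_add_card_inter_le_of_disjoint (A := B.1) hCC'.2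
    have hlower := card_add_card_add_card_le_of_disjoint (A := B.1) hCC'.2
    rw [Fintype.card_fin, B.2, C.2, C'.2] at hlower
    rw [B.2] at hupper
    rw [Walk.length_cons]
    constructor
    · intro hlen
      obtain ⟨v, rfl⟩ : ∃ v, u = v + 1 := ⟨u - 1, by omega⟩
      have := (ih v).2 (by omega)
      rw [add_one_mul]
      omega
    · intro hlen
      have := (ih u).1 (by omega)
      omega

lemma lt_length_of_forall {ℓ : ℕ} (heven : ∀ u, 2 * u ≤ ℓ → #(A.1 ∩ B.1) + u * r < k)
    (hodd : ∀ u, 2 * u + 1 ≤ ℓ → u * r < #(A.1 ∩ B.1))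
    (p : (kneserGraph (2 * k + r) k).Walk A B) : ℓ < p.length := by
  by_contra! hp
  obtain ⟨u, hu | hu⟩ := Nat.even_or_odd' p.length
  · exact (heven u (by omega)).not_ge ((card_inter_bounds_of_walk p u).1 hu)
  · exact (hodd u (by omega)).not_ge ((card_inter_bounds_of_walk p u).2 hu)

lemma exists_forall_lt_length (hk : 0 < k) (hr : 0 < r) :
    ∃ A B : {S : Finset (Fin (2 * k + r)) // #S = k},
      ∀ p : (kneserGraph (2 * k + r) k).Walk A B, (k - 1) ⌈/⌉ r < p.length := by
  set q := (k - 1) ⌈/⌉ r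
  have hkey : q ≠ 0 → q / 2 * r + (q - 1) / 2 * r < k - 1 := fun hq ↦ by
    rw [← add_mul, show q / 2 + (q - 1) / 2 = q - 1 by omega, mul_comm]
    exact lt_of_not_ge fun h ↦ by have := (ceilDiv_le_iff_le_mul hr).mpr h; omega
  have hhalf : q / 2 * r ≤ k - 1 := by
    rcases eq_or_ne q 0 with hq | hq
    · simp [hq]
    · have := hkey hq
      omega
  obtain ⟨A, B, hA, hB, hAB⟩ := exists_card_eq_card_eq_card_inter_eq (α := Fin (2 * k + r))
    (k := k) (s := k - 1 - q / 2 * r) (by omega) (by rw [Fintype.card_fin]; omega)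
  refine ⟨⟨A, hA⟩, ⟨B, hB⟩, lt_length_of_forall (fun u hu ↦ ?_) (fun u hu ↦ ?_)⟩
  · have := Nat.mul_le_mul_right r (show u ≤ q / 2 by omega)
    change #(A ∩ B) + _ < k
    omega
  · have := Nat.mul_le_mul_right r (show u ≤ (q - 1) / 2 by omega)
    have := hkey (by omega)
    change _ < #(A ∩ B)
    omega

lemma exists_walk_length_le_two_mul (hk : 0 < k) (m : ℕ) (h : k ≤ #(A.1 ∩ B.1) + m * r) :
    ∃ p : (kneserGraph (2 * k + r) k).Walk A B, p.length ≤ 2 * m := by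
  induction m generalizing A with
  | zero =>
    have hAB : A.1 ⊆ B.1 :=
      inter_eq_left.mp (eq_of_subset_of_card_le inter_subset_left (by rw [A.2]; omega))
    obtain rfl : A = B := Subtype.ext (eq_of_subset_of_card_le hAB (by rw [A.2, B.2]))
    exact ⟨.nil, le_rfl⟩
  | succ m ih =>
    obtain ⟨A', hA', hunion, hinter⟩ := exists_card_union_le_min_le_card_inter r A.2 B.2
    obtain ⟨C, hAC, hCA'⟩ := exists_adj_adj_of_card_union_le (B := ⟨A', hA'⟩) hk hunion
    have hA'B : k ≤ #(A' ∩ B.1) + m * r := by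
      rw [add_one_mul] at h
      omega
    obtain ⟨p, hp⟩ := ih (A := ⟨A', hA'⟩) hA'B
    exact ⟨.cons hAC (.cons hCA' p), by rw [Walk.length_cons, Walk.length_cons]; omega⟩

lemma exists_walk_length_le_two_mul_add_one (hk : 0 < k) (m : ℕ) (h : #(A.1 ∩ B.1) ≤ m * r) :
    ∃ p : (kneserGraph (2 * k + r) k).Walk A B, p.length ≤ 2 * m + 1 := by
  obtain ⟨D, hDB, hD⟩ := exists_adj_le_card_inter_add_card_inter (A := A) (B := B) hk
  obtain ⟨p, hp⟩ := exists_walk_length_le_two_mul (A := A) (B := D) hk m (by omega)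
  exact ⟨p.concat hDB, by rw [Walk.length_concat]; omega⟩

lemma exists_walk_length_le (hk : 0 < k) (hr : 0 < r) :
    ∃ p : (kneserGraph (2 * k + r) k).Walk A B, p.length ≤ (k - 1) ⌈/⌉ r + 1 := by
  set q := (k - 1) ⌈/⌉ r
  have hq : k - 1 ≤ q * r := mul_comm r q ▸ (ceilDiv_le_iff_le_mul hr).mp le_rfl
  have hsplit : q / 2 * r + (q + 1) / 2 * r = q * r := by
    rw [← add_mul]
    congr 1
    omega
  by_cases h : k ≤ #(A.1 ∩ B.1) + (q + 1) / 2 * r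
  · obtain ⟨p, hp⟩ := exists_walk_length_le_two_mul hk _ h
    exact ⟨p, by omega⟩
  · obtain ⟨p, hp⟩ := exists_walk_length_le_two_mul_add_one hk (q / 2) (A := A) (B := B)
      (by omega)
    exact ⟨p, by omega⟩

end kneserGraph

theorem stmt4 (k r : ℕ) (hk : 0 < k) (hr : 0 < r) :
    (kneserGraph (2 * k + r) k).diam = (k - 1) ⌈/⌉ r + 1 :=
  diam_eq_of_forall_exists_walk_length_le (fun _ _ ↦ kneserGraph.exists_walk_length_le hk hr)
    (kneserGraph.exists_forall_lt_length hk hr)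
end

section
/- Let k ≥ 2, 1 ≤ r < k-1, p ≥ 1, with 2p = diam(K(2k+r,k)) and r not dividing k-1. If A and B are k-subsets of [2k+r] that are not adjacent in the exact distance-2p Kneser graph K_{=2p}(2k+r,k), then their distance in K_{=2p}(2k+r,k) equals 2. -/
/-!
Write `s = |X ∩ Y|`. Along a Kneser edge `X — Z` the intersections with a fixed `Y` satisfy
`k - r ≤ |X ∩ Y| + |Z ∩ Y| ≤ k`, so a walk of length `2t` needs `k - s ≤ t r` and one of length
`2t + 1` needs `s ≤ t r`; conversely such walks exist. Hence, if the diameter is `2 (q + 1)`, a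
pair at maximal distance forces `2 (q r + 1) ≤ k`, a pair with `s = q r + 1` forces
`k < 2 (q r + 1) + r`, and then any two `k`-sets meeting in exactly `q r + 1` points are at
distance `2 (q + 1)`. Given `A` and `B`, these bounds leave room for a `k`-set `C` meeting each of
them in `q r + 1` points, and `A — C — B` is a path in the exact distance graph.
-/

open Finset SimpleGraph

namespace Finset

variable {α : Type*} [DecidableEq α]

theorem card_inter_add_card_inter_le_of_disjoint_s10 {X Z : Finset α} (Y : Finset α)
    (hXZ : Disjoint X Z) : #(X ∩ Y) + #(Z ∩ Y) ≤ #Y := by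
  rw [← card_union_of_disjoint (hXZ.mono inter_subset_left inter_subset_left)]
  exact card_le_card (union_subset inter_subset_right inter_subset_right)

theorem card_le_card_inter_add_card_inter_add_card_compl_union [Fintype α] (X Z Y : Finset α) :
    #Y ≤ #(X ∩ Y) + #(Z ∩ Y) + #(X ∪ Z)ᶜ := by
  calc #Y ≤ #(X ∩ Y ∪ Z ∩ Y ∪ (X ∪ Z)ᶜ) := card_le_card fun y hy => by
        by_cases hx : y ∈ X <;> by_cases hz : y ∈ Z <;> simp [*]
    _ ≤ _ := (card_union_le _ _).trans (by gcongr; exact card_union_le _ _)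

theorem exists_card_eq_inter_eq [Fintype α] {U D : Finset α} {n : ℕ} (hDU : D ⊆ U)
    (hDn : #D ≤ n) (hnD : n ≤ #D + #Uᶜ) : ∃ C : Finset α, #C = n ∧ U ∩ C = D := by
  have hdisj : Disjoint D Uᶜ := disjoint_of_subset_left hDU disjoint_compl_right
  obtain ⟨C, hDC, hCD, hC⟩ := exists_subsuperset_card_eq (subset_union_left (s₂ := Uᶜ)) hDn
    (by rwa [card_union_of_disjoint hdisj])
  refine ⟨C, hC, subset_antisymm (fun x hx => ?_) (subset_inter (hDU) hDC)⟩
  rw [mem_inter] at hx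
  simpa [hx.1] using hCD hx.2

theorem inter_union_union_eq {A B P Q R : Finset α} (hP : P ⊆ A ∩ B) (hQ : Q ⊆ A \ B)
    (hR : R ⊆ B \ A) : A ∩ (P ∪ Q ∪ R) = P ∪ Q := by
  ext x
  have hPx := @hP x; have hQx := @hQ x; have hRx := @hR x
  simp only [mem_inter, mem_union, mem_sdiff] at hPx hQx hRx ⊢
  tauto

end Finset

namespace SimpleGraph

variable {V : Type*} {G : SimpleGraph V} {u v w : V}

theorem dist_eq_two_of_adj_of_adj (huv : u ≠ v) (hn : ¬ G.Adj u v) (hw : G.Adj u w)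
    (hw' : G.Adj w v) : G.dist u v = 2 := by
  rw [dist, edist_eq_two_iff.mpr ⟨huv, hn, w, G.mem_commonNeighbors.mpr ⟨hw, hw'.symm⟩⟩]
  rfl

end SimpleGraph

theorem exactDistanceGraph_adj_of_dist_eq {V : Type*} {G : SimpleGraph V} {d : ℕ} {u v : V}
    (hd : d ≠ 0) (h : G.dist u v = d) : (exactDistanceGraph G d).Adj u v :=
  ⟨fun huv => hd (by simp [← h, huv]), h⟩

namespace kneserGraph

variable {k r : ℕ}

theorem adj_of_disjoint_s10 (hk : 0 < k) {X Y : {A : Finset (Fin (2 * k + r)) // #A = k}}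
    (h : Disjoint X.1 Y.1) : (kneserGraph (2 * k + r) k).Adj X Y := by
  refine ⟨fun hXY => ?_, h⟩
  rw [hXY, disjoint_self, bot_eq_empty] at h
  have := Y.2
  simp_all

theorem card_inter_le (X Y : {A : Finset (Fin (2 * k + r)) // #A = k}) : #(X.1 ∩ Y.1) ≤ k :=
  (card_le_card inter_subset_left).trans X.2.le

theorem card_inter_bounds_of_walk_s10 {X Y : {A : Finset (Fin (2 * k + r)) // #A = k}}
    (W : (kneserGraph (2 * k + r) k).Walk X Y) (t : ℕ) :
    (W.length = 2 * t → k ≤ #(X.1 ∩ Y.1) + t * r) ∧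
      (W.length = 2 * t + 1 → #(X.1 ∩ Y.1) ≤ t * r) := by
  induction W generalizing t with
  | @nil X => simp [X.2]
  | @cons X Z Y hXZ W ih =>
    have hle := card_inter_add_card_inter_le_of_disjoint_s10 Y.1 hXZ.2
    have hge := card_le_card_inter_add_card_inter_add_card_compl_union X.1 Z.1 Y.1
    rw [Finset.card_compl, card_union_of_disjoint hXZ.2, X.2, Z.2, Y.2, Fintype.card_fin] at hge
    rw [Walk.length_cons]
    constructor
    · intro hlen
      obtain ⟨t, rfl⟩ : ∃ t', t = t' + 1 := ⟨t - 1, by omega⟩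
      have := (ih t).2 (by omega)
      rw [add_one_mul]
      omega
    · intro hlen
      have := (ih t).1 (by omega)
      omega

theorem eq_of_le_card_inter {X Y : {A : Finset (Fin (2 * k + r)) // #A = k}}
    (h : k ≤ #(X.1 ∩ Y.1)) : X = Y := by
  have hX : X.1 ∩ Y.1 = X.1 := eq_of_subset_of_card_le inter_subset_left (by rwa [X.2])
  have hY : X.1 ∩ Y.1 = Y.1 := eq_of_subset_of_card_le inter_subset_right (by rwa [Y.2])
  exact Subtype.ext (hX.symm.trans hY)

theorem exists_adj_adj_of_card_union_le_s10 (hk : 0 < k)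
    {X Y : {A : Finset (Fin (2 * k + r)) // #A = k}} (h : #(X.1 ∪ Y.1) ≤ k + r) :
    ∃ W, (kneserGraph (2 * k + r) k).Adj X W ∧ (kneserGraph (2 * k + r) k).Adj W Y := by
  obtain ⟨W, hW, hWk⟩ := exists_subset_card_eq (s := (X.1 ∪ Y.1)ᶜ) (n := k)
    (by rw [Finset.card_compl, Fintype.card_fin]; omega)
  rw [subset_compl_iff_disjoint_left, disjoint_union_left] at hW
  exact ⟨⟨W, hWk⟩, adj_of_disjoint_s10 hk hW.1, adj_of_disjoint_s10 hk hW.2.symm⟩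

/-- `X'` trades up to `r` points of `X \ Y` for points of `Y \ X`; the bound `|X ∪ X'| ≤ k + r`
leaves room for a common neighbour of `X` and `X'`. -/
theorem exists_card_union_le_and_le_card_inter (X Y : {A : Finset (Fin (2 * k + r)) // #A = k}) :
    ∃ X' : {A : Finset (Fin (2 * k + r)) // #A = k},
      #(X.1 ∪ X'.1) ≤ k + r ∧ min (#(X.1 ∩ Y.1) + r) k ≤ #(X'.1 ∩ Y.1) := by
  have := card_inter_le X Y
  obtain ⟨F, hXYF, hFY, hF⟩ := exists_subsuperset_card_eq (inter_subset_right : X.1 ∩ Y.1 ⊆ Y.1)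
    (n := min (#(X.1 ∩ Y.1) + r) k) (by omega) (by rw [Y.2]; omega)
  obtain ⟨X', hFX', hX'XF, hX'⟩ := exists_subsuperset_card_eq (subset_union_right (s₁ := X.1))
    (n := k) (by rw [hF]; omega) (X.2 ▸ card_le_card subset_union_left)
  refine ⟨⟨X', hX'⟩, ?_, hF ▸ card_le_card (subset_inter hFX' hFY)⟩
  have hXF := card_union_add_card_inter X.1 F
  have hXYXF : #(X.1 ∩ Y.1) ≤ #(X.1 ∩ F) := card_le_card (subset_inter inter_subset_left hXYF)
  calc #(X.1 ∪ X') ≤ #(X.1 ∪ F) := card_le_card (union_subset subset_union_left hX'XF)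
    _ ≤ k + r := by omega

theorem exists_walk_length_le_two_mul_s10 (hk : 0 < k) (t : ℕ)
    (X Y : {A : Finset (Fin (2 * k + r)) // #A = k}) (h : k ≤ #(X.1 ∩ Y.1) + t * r) :
    ∃ W : (kneserGraph (2 * k + r) k).Walk X Y, W.length ≤ 2 * t := by
  induction t generalizing X with
  | zero =>
    obtain rfl := eq_of_le_card_inter (by simpa using h)
    exact ⟨.nil, by simp⟩
  | succ t ih =>
    obtain ⟨X', hXX', hX'Y⟩ := exists_card_union_le_and_le_card_inter X Y
    obtain ⟨Z, hXZ, hZX'⟩ := exists_adj_adj_of_card_union_le_s10 hk hXX'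
    obtain ⟨W, hW⟩ := ih X' (by rw [add_one_mul] at h; omega)
    exact ⟨.cons hXZ (.cons hZX' W), by simp only [Walk.length_cons]; omega⟩

theorem exists_walk_length_le_two_mul_add_one_s10 (hk : 0 < k) (t : ℕ)
    (X Y : {A : Finset (Fin (2 * k + r)) // #A = k}) (h : #(X.1 ∩ Y.1) ≤ t * r) :
    ∃ W : (kneserGraph (2 * k + r) k).Walk X Y, W.length ≤ 2 * t + 1 := by
  obtain ⟨Z, hYXZ, hZX, hZ⟩ := exists_subsuperset_card_eq
    (subset_compl_iff_disjoint_right.mpr sdiff_disjoint : Y.1 \ X.1 ⊆ X.1ᶜ) (n := k)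
    ((card_le_card sdiff_subset).trans Y.2.le)
    (by rw [Finset.card_compl, X.2, Fintype.card_fin]; omega)
  have hYX : #(Y.1 \ X.1) = k - #(X.1 ∩ Y.1) := by rw [card_sdiff, Y.2]
  have hZY : #(Y.1 \ X.1) ≤ #(Z ∩ Y.1) := card_le_card (subset_inter hYXZ sdiff_subset)
  have := card_inter_le X Y
  obtain ⟨W, hW⟩ := exists_walk_length_le_two_mul_s10 hk t ⟨Z, hZ⟩ Y (by simp only; omega)
  exact ⟨.cons (adj_of_disjoint_s10 hk (subset_compl_iff_disjoint_right.mp hZX).symm) W,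
    by simp only [Walk.length_cons]; omega⟩

theorem exists_card_inter_eq {s : ℕ} (hs : s ≤ k) :
    ∃ X Y : {A : Finset (Fin (2 * k + r)) // #A = k}, #(X.1 ∩ Y.1) = s := by
  obtain ⟨X, -, hX⟩ := exists_subset_card_eq (s := (univ : Finset (Fin (2 * k + r)))) (n := k)
    (by rw [card_univ, Fintype.card_fin]; omega)
  obtain ⟨S, hSX, hS⟩ := exists_subset_card_eq (s := X) (n := s) (by omega)
  obtain ⟨Y, hY, hXY⟩ := exists_card_eq_inter_eq hSX (n := k) (by omega)
    (by rw [Finset.card_compl, hX, Fintype.card_fin]; omega)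
  exact ⟨⟨X, hX⟩, ⟨Y, hY⟩, hXY ▸ hS⟩

instance : Nonempty {A : Finset (Fin (2 * k + r)) // #A = k} :=
  let ⟨X, _⟩ := exists_card_inter_eq (r := r) (le_refl k); ⟨X⟩

theorem connected (hk : 0 < k) (hr : 0 < r) : (kneserGraph (2 * k + r) k).Connected := by
  refine ⟨fun X Y => ?_⟩
  obtain ⟨W, -⟩ := exists_walk_length_le_two_mul_add_one_s10 hk k X Y
    ((card_inter_le X Y).trans (Nat.le_mul_of_pos_right k hr))
  exact ⟨W⟩

/-- One half of the distance formula `d(X, Y) = min (2⌈(k - s) / r⌉) (2⌈s / r⌉ + 1)`,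
`s = |X ∩ Y|`, of Valencia-Pabon and Vera. -/
theorem min_le_dist (hk : 0 < k) (hr : 0 < r) {X Y : {A : Finset (Fin (2 * k + r)) // #A = k}}
    {t u : ℕ} (ht : t * r < #(X.1 ∩ Y.1)) (hu : #(X.1 ∩ Y.1) + u * r < k) :
    min (2 * t + 3) (2 * u + 2) ≤ (kneserGraph (2 * k + r) k).dist X Y := by
  obtain ⟨W, hW⟩ := ((connected hk hr).preconnected X Y).exists_walk_length_eq_dist
  obtain ⟨v, hv | hv⟩ := Nat.even_or_odd' ((kneserGraph (2 * k + r) k).dist X Y)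
  · have := (card_inter_bounds_of_walk_s10 W v).1 (hW.trans hv)
    have : u < v := Nat.lt_of_mul_lt_mul_right (a := r) (by omega)
    omega
  · have := (card_inter_bounds_of_walk_s10 W v).2 (hW.trans hv)
    have : t < v := Nat.lt_of_mul_lt_mul_right (a := r) (by omega)
    omega

theorem exists_card_inter_eq_card_inter_eq (A B : {A : Finset (Fin (2 * k + r)) // #A = k})
    {s : ℕ} (h₁ : 2 * s ≤ k) (h₂ : k ≤ 2 * s + r) :
    ∃ C : {A : Finset (Fin (2 * k + r)) // #A = k}, #(A.1 ∩ C.1) = s ∧ #(B.1 ∩ C.1) = s := by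
  set i := min #(A.1 ∩ B.1) s
  have hAB := card_inter_le A B
  have hAB' : #(A.1 \ B.1) = k - #(A.1 ∩ B.1) := by rw [card_sdiff, A.2, inter_comm]
  have hBA' : #(B.1 \ A.1) = k - #(A.1 ∩ B.1) := by rw [card_sdiff, B.2]
  have hABc : #(A.1 ∪ B.1)ᶜ = r + #(A.1 ∩ B.1) := by
    have := card_union_add_card_inter A.1 B.1
    rw [A.2, B.2] at this
    rw [Finset.card_compl, Fintype.card_fin]
    omega
  obtain ⟨P, hP, hPi⟩ := exists_subset_card_eq (s := A.1 ∩ B.1) (n := i) (by omega)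
  obtain ⟨Q, hQ, hQi⟩ := exists_subset_card_eq (s := A.1 \ B.1) (n := s - i) (by omega)
  obtain ⟨R, hR, hRi⟩ := exists_subset_card_eq (s := B.1 \ A.1) (n := s - i) (by omega)
  have hPQ : Disjoint P Q := disjoint_sdiff.mono (hP.trans inter_subset_right) hQ
  have hPR : Disjoint P R := disjoint_sdiff.mono (hP.trans inter_subset_left) hR
  have hPQR : Disjoint (P ∪ Q) R :=
    disjoint_sdiff.mono (union_subset (hP.trans inter_subset_left) (hQ.trans sdiff_subset)) hR
  have hD : #(P ∪ Q ∪ R) = 2 * s - i := by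
    rw [card_union_of_disjoint hPQR, card_union_of_disjoint hPQ]
    omega
  have hDAB : P ∪ Q ∪ R ⊆ A.1 ∪ B.1 :=
    union_subset (union_subset (hP.trans (inter_subset_left.trans subset_union_left))
      (hQ.trans (sdiff_subset.trans subset_union_left)))
      (hR.trans (sdiff_subset.trans subset_union_right))
  obtain ⟨C, hC, hCD⟩ := exists_card_eq_inter_eq hDAB (n := k) (by omega) (by omega)
  have hAC : A.1 ∩ C = A.1 ∩ (P ∪ Q ∪ R) := by
    rw [← hCD, ← inter_assoc, inter_eq_left.mpr subset_union_left]
  have hBC : B.1 ∩ C = B.1 ∩ (P ∪ R ∪ Q) := by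
    rw [union_right_comm, ← hCD, ← inter_assoc, inter_eq_left.mpr subset_union_right]
  refine ⟨⟨C, hC⟩, ?_, ?_⟩
  · rw [hAC, inter_union_union_eq hP hQ hR, card_union_of_disjoint hPQ]
    omega
  · rw [hBC, inter_union_union_eq (inter_comm A.1 B.1 ▸ hP) hR hQ, card_union_of_disjoint hPR]
    omega

variable {q : ℕ}

theorem two_mul_add_two_le_of_diam_eq (hk : 0 < k)
    (hdiam : (kneserGraph (2 * k + r) k).diam = 2 * (q + 1)) : 2 * (q * r + 1) ≤ k := by
  obtain ⟨X, Y, hXY⟩ := (kneserGraph (2 * k + r) k).exists_dist_eq_diam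
  have hodd : q * r < #(X.1 ∩ Y.1) := by
    by_contra! h
    obtain ⟨W, hW⟩ := exists_walk_length_le_two_mul_add_one_s10 hk q X Y h
    have := dist_le W
    omega
  have heven : #(X.1 ∩ Y.1) + q * r < k := by
    by_contra! h
    obtain ⟨W, hW⟩ := exists_walk_length_le_two_mul_s10 hk q X Y h
    have := dist_le W
    omega
  omega

theorem dist_le_of_diam_eq (hdiam : (kneserGraph (2 * k + r) k).diam = 2 * (q + 1))
    (X Y : {A : Finset (Fin (2 * k + r)) // #A = k}) :
    (kneserGraph (2 * k + r) k).dist X Y ≤ 2 * (q + 1) :=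
  hdiam ▸ dist_le_diam (ediam_ne_top_of_diam_ne_zero (by omega))

theorem lt_two_mul_add_add_of_diam_eq (hk : 0 < k) (hr : 0 < r)
    (hdiam : (kneserGraph (2 * k + r) k).diam = 2 * (q + 1)) (hqk : q * r + 1 ≤ k) :
    k < 2 * (q * r + 1) + r := by
  obtain ⟨X, Y, hXY⟩ := exists_card_inter_eq (r := r) hqk
  by_contra! h
  have := min_le_dist hk hr (X := X) (Y := Y) (t := q) (u := q + 1) (by omega)
    (by rw [hXY, add_one_mul]; omega)
  have := dist_le_of_diam_eq hdiam X Y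
  omega

theorem dist_eq_of_diam_eq (hk : 0 < k) (hr : 0 < r)
    (hdiam : (kneserGraph (2 * k + r) k).diam = 2 * (q + 1)) (hqk : 2 * (q * r + 1) ≤ k)
    {X Y : {A : Finset (Fin (2 * k + r)) // #A = k}} (hXY : #(X.1 ∩ Y.1) = q * r + 1) :
    (kneserGraph (2 * k + r) k).dist X Y = 2 * (q + 1) := by
  have := min_le_dist hk hr (X := X) (Y := Y) (t := q) (u := q) (by omega) (by omega)
  have := dist_le_of_diam_eq hdiam X Y
  omega

end kneserGraph

theorem stmt10_general (k r p : ℕ) (hk : 2 ≤ k) (hr : 1 ≤ r) (hp : 1 ≤ p)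
    (hdiam : 2 * p = (kneserGraph (2 * k + r) k).diam)
    (A B : {A : Finset (Fin (2 * k + r)) // A.card = k}) (hAB : A ≠ B)
    (hnadj : ¬ (exactDistanceGraph (kneserGraph (2 * k + r) k) (2 * p)).Adj A B) :
    (exactDistanceGraph (kneserGraph (2 * k + r) k) (2 * p)).dist A B = 2 := by
  obtain ⟨q, rfl⟩ : ∃ q, p = q + 1 := ⟨p - 1, by omega⟩
  have hk₀ : 0 < k := by omega
  have hlow := kneserGraph.two_mul_add_two_le_of_diam_eq hk₀ hdiam.symm
  have hhigh := kneserGraph.lt_two_mul_add_add_of_diam_eq hk₀ hr hdiam.symm (by omega)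
  obtain ⟨C, hAC, hBC⟩ := kneserGraph.exists_card_inter_eq_card_inter_eq A B hlow hhigh.le
  have hAC := kneserGraph.dist_eq_of_diam_eq hk₀ hr hdiam.symm hlow hAC
  have hBC := kneserGraph.dist_eq_of_diam_eq hk₀ hr hdiam.symm hlow hBC
  rw [dist_comm] at hBC
  exact dist_eq_two_of_adj_of_adj hAB hnadj (exactDistanceGraph_adj_of_dist_eq (by omega) hAC)
    (exactDistanceGraph_adj_of_dist_eq (by omega) hBC)

theorem stmt10 (k r p : ℕ) (hk : 2 ≤ k) (hr : 1 ≤ r) (hrk : r < k - 1) (hp : 1 ≤ p)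
    (hdiam : 2 * p = (kneserGraph (2 * k + r) k).diam) (hnd : ¬ r ∣ (k - 1))
    (A B : {A : Finset (Fin (2 * k + r)) // A.card = k}) (hAB : A ≠ B)
    (hnadj : ¬ (exactDistanceGraph (kneserGraph (2 * k + r) k) (2 * p)).Adj A B) :
    (exactDistanceGraph (kneserGraph (2 * k + r) k) (2 * p)).dist A B = 2 :=
  stmt10_general k r p hk hr hp hdiam A B hAB hnadj
end

section
/- Let k ≥ 2, 1 ≤ r < k-1, p ≥ 1, with 2p < diam(K(2k+r,k)) or r dividing k-1. If A and B are k-subsets of [2k+r] joined by a path of length ℓ in the exact distance-2p Kneser graph K_{=2p}(2k+r,k), then |A ∩ B| ≥ k - ℓrp. -/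
/-!
For `k`-sets, `k - |A ∩ B| = |A \ B|`, and `(A, B) ↦ |A \ B|` satisfies the triangle inequality.
Two `k`-sets of `[2k+r]` disjoint from a common `k`-set lie in its complement, of size `k + r`,
so two consecutive Kneser steps change a set by at most `r` elements. Hence `|X \ Y| ≤ rp` when
`X` and `Y` are at Kneser distance `2p`, and summing along the walk gives `|A \ B| ≤ ℓrp`.
-/

open Finset

theorem Finset.card_sdiff_le_card_sdiff_add_card_sdiff_s12 {α : Type*} [DecidableEq α]
    (A B C : Finset α) : #(A \ C) ≤ #(A \ B) + #(B \ C) :=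
  (card_le_card (sdiff_triangle A B C)).trans (card_union_le _ _)

theorem Finset.card_sdiff_add_card_add_card_le_of_disjoint_s12 {α : Type*} [Fintype α]
    [DecidableEq α] {X Y Z : Finset α} (hXZ : Disjoint X Z) (hYZ : Disjoint Y Z) :
    #(X \ Y) + #Y + #Z ≤ Fintype.card α := by
  rw [card_sdiff_add_card, ← card_union_of_disjoint (disjoint_union_left.2 ⟨hXZ, hYZ⟩)]
  exact card_le_univ _

theorem SimpleGraph.Walk.card_sdiff_le_length_mul {V α : Type*} [DecidableEq α]
    {G : SimpleGraph V} (f : V → Finset α) {c : ℕ}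
    (hadj : ∀ X Y, G.Adj X Y → #(f X \ f Y) ≤ c) {u v : V} (w : G.Walk u v) :
    #(f u \ f v) ≤ w.length * c := by
  induction w with
  | nil => simp
  | @cons X Y Z h w ih =>
    calc #(f X \ f Z) ≤ #(f X \ f Y) + #(f Y \ f Z) :=
          card_sdiff_le_card_sdiff_add_card_sdiff_s12 _ _ _
      _ ≤ c + w.length * c := add_le_add (hadj X Y h) ih
      _ = (w.cons h).length * c := by rw [length_cons]; ring

namespace kneserGraph

variable {k r : ℕ}

theorem card_sdiff_le_of_adj_of_adj_s12 {X Y Z : {A : Finset (Fin (2 * k + r)) // A.card = k}}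
    (hXZ : (kneserGraph (2 * k + r) k).Adj X Z) (hZY : (kneserGraph (2 * k + r) k).Adj Z Y) :
    #(X.1 \ Y.1) ≤ r := by
  have := card_sdiff_add_card_add_card_le_of_disjoint_s12 hXZ.2 hZY.2.symm
  rw [Y.2, Z.2, Fintype.card_fin] at this
  omega

theorem card_sdiff_le_of_walk {X Y : {A : Finset (Fin (2 * k + r)) // A.card = k}} (i : ℕ)
    (w : (kneserGraph (2 * k + r) k).Walk X Y) (hw : w.length = 2 * i) :
    #(X.1 \ Y.1) ≤ r * i := by
  induction i generalizing X with
  | zero => obtain rfl := SimpleGraph.Walk.eq_of_length_eq_zero hw; simp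
  | succ i ih =>
    match w, hw with
    | .cons (v := Z) hXZ (.cons (v := W) hZW w), hw =>
      simp only [SimpleGraph.Walk.length_cons] at hw
      calc #(X.1 \ Y.1) ≤ #(X.1 \ W.1) + #(W.1 \ Y.1) :=
            card_sdiff_le_card_sdiff_add_card_sdiff_s12 _ _ _
        _ ≤ r + r * i := add_le_add (card_sdiff_le_of_adj_of_adj_s12 hXZ hZW) (ih w (by omega))
        _ = r * (i + 1) := by ring

theorem card_sdiff_le_of_dist_eq {X Y : {A : Finset (Fin (2 * k + r)) // A.card = k}} {p : ℕ}
    (hp : 1 ≤ p) (h : (kneserGraph (2 * k + r) k).dist X Y = 2 * p) :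
    #(X.1 \ Y.1) ≤ r * p := by
  obtain ⟨w, hw⟩ := SimpleGraph.exists_walk_of_dist_ne_zero (h.trans_ne (by omega))
  exact card_sdiff_le_of_walk p w (hw.trans h)

end kneserGraph

theorem stmt12_general (k r p ℓ : ℕ) (hp : 1 ≤ p)
    (A B : {A : Finset (Fin (2 * k + r)) // A.card = k})
    (hpath : ∃ w : (exactDistanceGraph (kneserGraph (2 * k + r) k) (2 * p)).Walk A B,
      w.length = ℓ) :
    k - ℓ * r * p ≤ (A.1 ∩ B.1).card := by
  obtain ⟨w, rfl⟩ := hpath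
  have hmove : #(A.1 \ B.1) ≤ w.length * (r * p) :=
    SimpleGraph.Walk.card_sdiff_le_length_mul (G := exactDistanceGraph _ _) Subtype.val
      (fun _ _ h ↦ kneserGraph.card_sdiff_le_of_dist_eq hp h.2) w
  rw [card_sdiff, A.2, inter_comm, ← mul_assoc] at hmove
  omega

theorem stmt12 (k r p ℓ : ℕ) (hk : 2 ≤ k) (hr : 1 ≤ r) (hrk : r < k - 1) (hp : 1 ≤ p)
    (hcond : 2 * p < (kneserGraph (2 * k + r) k).diam ∨ r ∣ (k - 1))
    (A B : {A : Finset (Fin (2 * k + r)) // A.card = k})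
    (hpath : ∃ w : (exactDistanceGraph (kneserGraph (2 * k + r) k) (2 * p)).Walk A B,
      w.length = ℓ) :
    k - ℓ * r * p ≤ (A.1 ∩ B.1).card :=
  stmt12_general k r p ℓ hp A B hpath
end
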